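/- arXiv:1702.01840 — 2 statements merged into one kernel-verified Lean document; each statement's English description precedes it below -/
import Mathlib

section
/- Let S : Fin F → ℤ take values in {0,1} with Σ_f S f = C where C < F, and let ΔS : Fin F → ℤ be a caching action with values in {−1,0,1} such that S f + ΔS f ∈ {0,1} for all f and Σ_f (S f + ΔS f) ≤ C. If ΔS is optimal in the sense that it minimizes an antitone function G of the resulting cache state S + ΔS (G(S₁) > G(S₂) whenever S₁ ≤ S₂ componentwise with strict inequality somewhere) over all feasible ΔS, then Σ_f (S f + ΔS f) = C; i.e., the optimal caching action keeps the cache full. -/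
theorem optimal_caching_keeps_cache_full (F C : ℕ) (hCF : C < F)
    (S ΔS : Fin F → ℤ)
    (hS01 : ∀ f, S f = 0 ∨ S f = 1) (hSsum : ∑ f, S f = (C : ℤ))
    (hΔvals : ∀ f, ΔS f = -1 ∨ ΔS f = 0 ∨ ΔS f = 1)
    (hfeas1 : ∀ f, S f + ΔS f = 0 ∨ S f + ΔS f = 1)
    (hfeas2 : ∑ f, (S f + ΔS f) ≤ (C : ℤ))
    (G : (Fin F → ℤ) → ℝ)
    (hG : ∀ S₁ S₂ : Fin F → ℤ, (∀ f, S₁ f ≤ S₂ f) → (∃ f, S₁ f < S₂ f) → G S₂ < G S₁)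
    (hopt : ∀ ΔS' : Fin F → ℤ, (∀ f, ΔS' f = -1 ∨ ΔS' f = 0 ∨ ΔS' f = 1) →
      (∀ f, S f + ΔS' f = 0 ∨ S f + ΔS' f = 1) → (∑ f, (S f + ΔS' f)) ≤ (C : ℤ) →
      G (fun f => S f + ΔS f) ≤ G (fun f => S f + ΔS' f)) :
    ∑ f, (S f + ΔS f) = (C : ℤ) := by
  by_contra hne
  have hlt : ∑ f, (S f + ΔS f) < (C : ℤ) := lt_of_le_of_ne hfeas2 hne
  -- find a coordinate where S f + ΔS f = 0
  have hex : ∃ f₀, S f₀ + ΔS f₀ = 0 := by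
    by_contra h
    push_neg at h
    have hall : ∀ f, S f + ΔS f = 1 := fun f => (hfeas1 f).resolve_left (h f)
    have : ∑ f, (S f + ΔS f) = (F : ℤ) := by
      simp [hall]
    omega
  obtain ⟨f₀, hf₀⟩ := hex
  -- new action: add file f₀
  set ΔS' : Fin F → ℤ := fun f => if f = f₀ then 1 - S f₀ else ΔS f with hΔS'
  have hvals' : ∀ f, ΔS' f = -1 ∨ ΔS' f = 0 ∨ ΔS' f = 1 := by
    intro f
    by_cases hf : f = f₀ <;> simp [hΔS', hf]
    · rcases hS01 f₀ with h | h <;> omega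
    · exact hΔvals f
  have hfeas1' : ∀ f, S f + ΔS' f = 0 ∨ S f + ΔS' f = 1 := by
    intro f
    by_cases hf : f = f₀ <;> simp [hΔS', hf]
    exact hfeas1 f
  have hsum' : ∑ f, (S f + ΔS' f) = (∑ f, (S f + ΔS f)) + 1 := by
    have : ∀ f, S f + ΔS' f = (S f + ΔS f) + (if f = f₀ then (1 : ℤ) else 0) := by
      intro f
      by_cases hf : f = f₀ <;> simp [hΔS', hf]
      exact hf₀
    rw [Finset.sum_congr rfl (fun f _ => this f), Finset.sum_add_distrib]
    simp
  have hfeas2' : ∑ f, (S f + ΔS' f) ≤ (C : ℤ) := by omega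
  have hle : ∀ f, S f + ΔS f ≤ S f + ΔS' f := by
    intro f
    by_cases hf : f = f₀
    · subst hf; simp [hΔS', hf₀]
    · simp [hΔS', hf]
  have hstrict : ∃ f, S f + ΔS f < S f + ΔS' f := by
    refine ⟨f₀, ?_⟩
    simp [hΔS', hf₀]
  have hGlt := hG (fun f => S f + ΔS f) (fun f => S f + ΔS' f) hle hstrict
  have := hopt ΔS' hvals' hfeas1' hfeas2'
  linarith
end

section
/- Let θ, θ' ∈ ℝ, and suppose (θ, V) and per-component pairs (θ_k, V_k), k ∈ Fin K, satisfy: V(x) = Σ_k V_k(x k) for all x in a product state space, the per-stage cost decomposes as c(x, u) = Σ_k c_k(x k, u k) over product actions u, and the transition kernel factorizes as a product of per-component kernels. If for each k the pair (θ_k, V_k) solves the per-component average-cost Bellman equation θ_k + V_k(x_k) = min_{u_k} [c_k(x_k,u_k) + Σ_{x'_k} p_k(x_k,u_k,x'_k) V_k(x'_k)], then (Σ_k θ_k, V) solves the joint average-cost Bellman equation θ + V(x) = min_u [c(x,u) + Σ_{x'} p(x,u,x') V(x')] with θ = Σ_k θ_k. -/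
open Finset

lemma sum_pi_prod_single {K : ℕ} (X : Fin K → Type*) [∀ k, Fintype (X k)]
    (g : ∀ k, X k → ℝ) (h1 : ∀ k, ∑ y, g k y = 1) (j : Fin K) (W : X j → ℝ) :
    ∑ x : ∀ k, X k, (∏ k, g k (x k)) * W (x j) = ∑ y, g j y * W y := by
  classical
  set f : ∀ k, X k → ℝ := Function.update g j (fun y => g j y * W y) with hf
  have hfj : f j = fun y => g j y * W y := by simp [hf]
  have hfk : ∀ k, k ≠ j → f k = g k := fun k hk => Function.update_of_ne hk _ _
  have key : ∀ x : ∀ k, X k, (∏ k, g k (x k)) * W (x j) = ∏ k, f k (x k) := by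
    intro x
    rw [← Finset.prod_erase_mul Finset.univ (fun k => f k (x k)) (mem_univ j),
      ← Finset.prod_erase_mul Finset.univ (fun k => g k (x k)) (mem_univ j)]
    have e1 : ∏ k ∈ Finset.univ.erase j, f k (x k) = ∏ k ∈ Finset.univ.erase j, g k (x k) :=
      Finset.prod_congr rfl fun k hk => by rw [hfk k (Finset.ne_of_mem_erase hk)]
    rw [e1]; simp only [hfj]; ring
  rw [Finset.sum_congr rfl (fun x _ => key x), ← Fintype.prod_sum]
  rw [← Finset.prod_erase_mul Finset.univ (fun k => ∑ y, f k y) (mem_univ j)]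
  have e2 : ∏ k ∈ Finset.univ.erase j, ∑ y, f k y = 1 := by
    apply Finset.prod_eq_one
    intro k hk
    rw [hfk k (Finset.ne_of_mem_erase hk)]
    exact h1 k
  rw [e2, one_mul]
  simp only [hfj]

lemma inf'_pi_sum {K : ℕ} (U : Fin K → Type*) [∀ k, Fintype (U k)] [∀ k, Nonempty (U k)]
    (f : ∀ k, U k → ℝ) :
    (Finset.univ.inf' Finset.univ_nonempty (fun u : ∀ k, U k => ∑ k, f k (u k))) =
      ∑ k, Finset.univ.inf' Finset.univ_nonempty (f k) := by
  apply le_antisymm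
  · have hmin : ∀ k, ∃ uk : U k, Finset.univ.inf' Finset.univ_nonempty (f k) = f k uk := by
      intro k
      obtain ⟨uk, _, h⟩ := Finset.exists_mem_eq_inf' Finset.univ_nonempty (f k)
      exact ⟨uk, h⟩
    choose ustar hustar using hmin
    calc Finset.univ.inf' Finset.univ_nonempty (fun u : ∀ k, U k => ∑ k, f k (u k))
        ≤ ∑ k, f k (ustar k) := Finset.inf'_le _ (mem_univ _)
      _ = ∑ k, Finset.univ.inf' Finset.univ_nonempty (f k) :=
          Finset.sum_congr rfl fun k _ => (hustar k).symm
  · apply Finset.le_inf'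
    intro u _
    exact Finset.sum_le_sum fun k _ => Finset.inf'_le _ (mem_univ _)

theorem separable_bellman_decomposition {K : ℕ}
    (X U : Fin K → Type*) [∀ k, Fintype (X k)] [∀ k, Nonempty (X k)]
    [∀ k, Fintype (U k)] [∀ k, Nonempty (U k)]
    (c : ∀ k, X k → U k → ℝ) (p : ∀ k, X k → U k → X k → ℝ)
    (hrow : ∀ k xk uk, ∑ x'k, p k xk uk x'k = 1)
    (hnn : ∀ k xk uk x'k, 0 ≤ p k xk uk x'k)
    (θ : Fin K → ℝ) (V : ∀ k, X k → ℝ)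
    (hbell : ∀ k (xk : X k), θ k + V k xk =
      Finset.univ.inf' Finset.univ_nonempty
        (fun uk : U k => c k xk uk + ∑ x'k, p k xk uk x'k * V k x'k)) :
    ∀ x : (k : Fin K) → X k,
      (∑ k, θ k) + (∑ k, V k (x k)) =
        Finset.univ.inf' Finset.univ_nonempty
          (fun u : (k : Fin K) → U k =>
            (∑ k, c k (x k) (u k)) +
              ∑ x' : (k : Fin K) → X k,
                (∏ k, p k (x k) (u k) (x' k)) * (∑ k, V k (x' k))) := by
  intro x
  have hstep : ∀ u : (k : Fin K) → U k,
      (∑ x' : (k : Fin K) → X k,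
          (∏ k, p k (x k) (u k) (x' k)) * (∑ k, V k (x' k))) =
        ∑ j, ∑ y, p j (x j) (u j) y * V j y := by
    intro u
    have h1 : ∀ x' : (k : Fin K) → X k,
        (∏ k, p k (x k) (u k) (x' k)) * (∑ k, V k (x' k)) =
          ∑ j, (∏ k, p k (x k) (u k) (x' k)) * V j (x' j) := by
      intro x'; rw [Finset.mul_sum]
    rw [Finset.sum_congr rfl (fun x' _ => h1 x'), Finset.sum_comm]
    exact Finset.sum_congr rfl fun j _ =>
      sum_pi_prod_single X (fun k => p k (x k) (u k)) (fun k => hrow k (x k) (u k)) j (V j)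
  have hobj : (fun u : (k : Fin K) → U k =>
      (∑ k, c k (x k) (u k)) +
        ∑ x' : (k : Fin K) → X k,
          (∏ k, p k (x k) (u k) (x' k)) * (∑ k, V k (x' k))) =
      fun u => ∑ k, (c k (x k) (u k) + ∑ x'k, p k (x k) (u k) x'k * V k x'k) := by
    funext u
    rw [hstep u, ← Finset.sum_add_distrib]
  rw [hobj, inf'_pi_sum U (fun k uk => c k (x k) uk + ∑ x'k, p k (x k) uk x'k * V k x'k),
    ← Finset.sum_add_distrib]
  exact Finset.sum_congr rfl fun k _ => hbell k (x k)
end
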